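/- arXiv:math/0610434 — 13 statements merged into one kernel-verified Lean document; each statement's English description precedes it below -/
import Mathlib

section
/- Let P_0, ..., P_n be n+1 points in general position in R^n (i.e., the vectors P_i - P_0 for i=1,...,n are linearly independent), and let P_{i,i+1} = (1-ξ_i)P_i + ξ_i P_{i+1} be points on the lines P_i P_{i+1} (indices mod n+1), with each ξ_i ∉ {0,1}. Then the n+1 points P_{i,i+1} lie in an (n-1)-dimensional affine subspace if and only if ∏_{i=0}^{n} ξ_i/(1-ξ_i) = (-1)^{n+1}. -/
/-!
In barycentric coordinates with respect to the simplex `P`, the point `Q i` has coordinate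
`1 - ξ i` at vertex `i`, `ξ i` at vertex `i + 1` and `0` elsewhere. So the `Q i` lie in a
hyperplane iff they are affinely dependent iff this cyclic bidiagonal coordinate matrix is
singular. The only permutations with nonzero contribution to its determinant are the identity
and the cyclic rotation, whence the determinant is `∏ (1 - ξ i) + (-1) ^ n ∏ ξ i`.
-/

open Module Finset

theorem exists_affineSubspace_finrank_direction_le_iff {k V P ι : Type*} [DivisionRing k]
    [AddCommGroup V] [Module k V] [AddTorsor V P] [FiniteDimensional k V] (p : ι → P) (m : ℕ) :
    (∃ s : AffineSubspace k P, (∀ i, p i ∈ s) ∧ finrank k s.direction ≤ m) ↔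
      finrank k (vectorSpan k (Set.range p)) ≤ m := by
  constructor
  · rintro ⟨s, hps, hs⟩
    have hspan : affineSpan k (Set.range p) ≤ s :=
      affineSpan_le.mpr (Set.range_subset_iff.mpr hps)
    rw [← direction_affineSpan]
    exact (Submodule.finrank_mono (AffineSubspace.direction_le hspan)).trans hs
  · intro h
    exact ⟨affineSpan k (Set.range p), fun i => mem_affineSpan k ⟨i, rfl⟩,
      by rwa [direction_affineSpan]⟩

open Fin.NatCast in
theorem Equiv.Perm.eq_one_or_eq_finRotate_of_forall {n : ℕ} (σ : Perm (Fin (n + 2)))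
    (h : ∀ i, σ i = i ∨ σ i = i + 1) : σ = 1 ∨ σ = finRotate (n + 2) := by
  by_cases hfix : ∀ i, σ i = i
  · exact .inl (Equiv.ext hfix)
  obtain ⟨i₀, hi₀⟩ := not_forall.mp hfix
  have hstep : ∀ i, σ i = i + 1 → σ (i + 1) = i + 1 + 1 := fun i hi =>
    (h (i + 1)).resolve_left fun hi₁ => by simpa using σ.injective (hi.trans hi₁.symm)
  have hshift : ∀ k : ℕ, σ (i₀ + k) = i₀ + k + 1 := by
    intro k
    induction k with
    | zero => simpa using (h i₀).resolve_left hi₀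
    | succ k ih => simpa [add_assoc] using hstep _ ih
  refine .inr (Equiv.ext fun j => ?_)
  simpa [finRotate_apply] using hshift (j - i₀ : Fin (n + 2))

namespace Matrix

variable {R : Type*} {n : ℕ}

-- Size at least two, so that the diagonal and the cyclic superdiagonal are disjoint.
def cyclicBidiagonal [Zero R] (a b : Fin (n + 2) → R) : Matrix (Fin (n + 2)) (Fin (n + 2)) R :=
  of fun i j => if j = i then a i else if j = i + 1 then b i else 0

section Zero

variable [Zero R] (a b : Fin (n + 2) → R)

@[simp]
theorem cyclicBidiagonal_apply_self (i : Fin (n + 2)) : cyclicBidiagonal a b i i = a i := by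
  simp [cyclicBidiagonal]

@[simp]
theorem cyclicBidiagonal_apply_add_one (i : Fin (n + 2)) :
    cyclicBidiagonal a b i (i + 1) = b i := by
  simp [cyclicBidiagonal]

theorem cyclicBidiagonal_apply_of_ne {i j : Fin (n + 2)} (h₀ : j ≠ i) (h₁ : j ≠ i + 1) :
    cyclicBidiagonal a b i j = 0 := by
  simp [cyclicBidiagonal, h₀, h₁]

end Zero

theorem det_cyclicBidiagonal [CommRing R] (a b : Fin (n + 2) → R) :
    (cyclicBidiagonal a b).det = ∏ i, a i + (-1) ^ (n + 1) * ∏ i, b i := by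
  have hsupp : ∀ σ ∈ univ, σ ∉ ({1, finRotate (n + 2)} : Finset _) →
      (Equiv.Perm.sign σ : R) * ∏ i, (cyclicBidiagonal a b)ᵀ (σ i) i = 0 := by
    intro σ _ hσ
    rw [mem_insert, mem_singleton] at hσ
    obtain ⟨i, hi⟩ : ∃ i, σ i ≠ i ∧ σ i ≠ i + 1 := by
      by_contra! h
      exact hσ (σ.eq_one_or_eq_finRotate_of_forall fun i => or_iff_not_imp_left.mpr (h i))
    rw [prod_eq_zero (mem_univ i) (cyclicBidiagonal_apply_of_ne (i := i) (j := σ i) a b hi.1 hi.2),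
      mul_zero]
  have hne : (1 : Equiv.Perm (Fin (n + 2))) ≠ finRotate (n + 2) := fun h => by
    simpa using congr($h 0)
  rw [← det_transpose, det_apply', ← sum_subset (subset_univ _) hsupp, sum_pair hne]
  simp [sign_finRotate, finRotate_apply]

end Matrix

namespace AffineBasis

variable {k V P : Type*} [Field k] [AddCommGroup V] [Module k V] [AddTorsor V P]

theorem affineIndependent_iff_det_toMatrix_ne_zero {ι : Type*} [Fintype ι] [DecidableEq ι]
    (b : AffineBasis ι k P) (q : ι → P) : AffineIndependent k q ↔ (b.toMatrix q).det ≠ 0 := by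
  have : FiniteDimensional k V := b.finiteDimensional
  rw [← isUnit_iff_ne_zero, ← Matrix.isUnit_iff_isUnit_det, b.isUnit_toMatrix_iff,
    iff_self_and]
  exact fun hq => hq.affineSpan_eq_top_iff_card_eq_finrank_add_one.mpr b.card_eq_finrank_add_one

theorem toMatrix_lineMap_add_one {n : ℕ} (b : AffineBasis (Fin (n + 2)) k P)
    (t : Fin (n + 2) → k) :
    b.toMatrix (fun i => AffineMap.lineMap (b i) (b (i + 1)) (t i)) =
      Matrix.cyclicBidiagonal (fun i => 1 - t i) t := by
  ext i j
  rw [toMatrix_apply, AffineMap.apply_lineMap, coord_apply, coord_apply,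
    AffineMap.lineMap_apply_module]
  by_cases h₀ : j = i
  · subst h₀
    simp
  by_cases h₁ : j = i + 1
  · subst h₁
    simp
  simp [Matrix.cyclicBidiagonal_apply_of_ne _ _ h₀ h₁, h₀, h₁]

end AffineBasis

theorem prod_div_one_sub_eq_neg_one_pow_iff {ι K : Type*} [Fintype ι] [Field K] (ξ : ι → K)
    (hξ : ∀ i, ξ i ≠ 1) (n : ℕ) :
    ∏ i, ξ i / (1 - ξ i) = (-1) ^ (n + 1) ↔ ∏ i, (1 - ξ i) + (-1) ^ n * ∏ i, ξ i = 0 := by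
  have hden : ∏ i, (1 - ξ i) ≠ 0 := prod_ne_zero_iff.mpr fun i _ => sub_ne_zero.mpr (hξ i).symm
  have hsq : ((-1 : K) ^ n) ^ 2 = 1 := by rw [← pow_mul, pow_mul', neg_one_sq, one_pow]
  rw [prod_div_distrib, div_eq_iff hden]
  constructor <;> intro h
  · linear_combination (-1) ^ n * h - (∏ i, (1 - ξ i)) * hsq
  · linear_combination (-1) ^ n * h - (∏ i, ξ i) * hsq

theorem generalized_menelaus_general (n : ℕ) (hn : 1 ≤ n)
    (P : Fin (n + 1) → (Fin n → ℝ))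
    (hgen : LinearIndependent ℝ (fun i : Fin n => P i.succ - P 0))
    (ξ : Fin (n + 1) → ℝ) (hξ1 : ∀ i, ξ i ≠ 1)
    (Q : Fin (n + 1) → (Fin n → ℝ))
    (hQ : ∀ i, Q i = (1 - ξ i) • P i + ξ i • P (i + 1)) :
    (∃ s : AffineSubspace ℝ (Fin n → ℝ), (∀ i, Q i ∈ s) ∧
      Module.finrank ℝ s.direction ≤ n - 1) ↔
    ∏ i, ξ i / (1 - ξ i) = (-1 : ℝ) ^ (n + 1) := by
  obtain ⟨m, rfl⟩ : ∃ m, n = m + 1 := ⟨n - 1, by omega⟩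
  have hP : AffineIndependent ℝ P := by
    rw [affineIndependent_iff_linearIndependent_vsub ℝ P 0,
      ← linearIndependent_equiv (finSuccAboveEquiv 0)]
    exact hgen
  let b : AffineBasis (Fin (m + 2)) ℝ (Fin (m + 1) → ℝ) :=
    ⟨P, hP, hP.affineSpan_eq_top_iff_card_eq_finrank_add_one.mpr (by simp)⟩
  have hQb : Q = fun i => AffineMap.lineMap (b i) (b (i + 1)) (ξ i) :=
    funext fun i => by rw [hQ, AffineMap.lineMap_apply_module]; rfl
  rw [exists_affineSubspace_finrank_direction_le_iff, Nat.add_sub_cancel,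
    finrank_vectorSpan_le_iff_not_affineIndependent ℝ Q (by simp),
    b.affineIndependent_iff_det_toMatrix_ne_zero, hQb, b.toMatrix_lineMap_add_one,
    Matrix.det_cyclicBidiagonal, not_not, prod_div_one_sub_eq_neg_one_pow_iff ξ hξ1]

/-- Generalized Menelaus theorem: the points `Q i = (1-ξ i) • P i + ξ i • P (i+1)`
on the edges of a simplex in general position lie in an `(n-1)`-dimensional affine
subspace iff `∏ ξ i / (1 - ξ i) = (-1)^(n+1)`. -/
theorem generalized_menelaus (n : ℕ) (hn : 1 ≤ n)
    (P : Fin (n + 1) → (Fin n → ℝ))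
    (hgen : LinearIndependent ℝ (fun i : Fin n => P i.succ - P 0))
    (ξ : Fin (n + 1) → ℝ) (hξ0 : ∀ i, ξ i ≠ 0) (hξ1 : ∀ i, ξ i ≠ 1)
    (Q : Fin (n + 1) → (Fin n → ℝ))
    (hQ : ∀ i, Q i = (1 - ξ i) • P i + ξ i • P (i + 1)) :
    (∃ s : AffineSubspace ℝ (Fin n → ℝ), (∀ i, Q i ∈ s) ∧
      Module.finrank ℝ s.direction ≤ n - 1) ↔
    ∏ i, ξ i / (1 - ξ i) = (-1 : ℝ) ^ (n + 1) :=
  generalized_menelaus_general n hn P hgen ξ hξ1 Q hQ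
end

section
/- The n+1 points P_{i,i+1} = (1-ξ_i)P_i + ξ_i P_{i+1} (indices mod n+1) on the edges of a simplex P_0,...,P_n in general position in R^n are affinely dependent with a nontrivial relation ∑ α_i P_{i,i+1} = 0, ∑ α_i = 0, if and only if the homogeneous linear system ξ_i α_i + (1-ξ_{i+1}) α_{i+1} = 0 for i = 0,...,n (indices mod n+1) has a nontrivial solution, which happens exactly when ∏_{i=0}^n ξ_i = (-1)^{n+1} ∏_{i=0}^n (1-ξ_i). -/
open Finset Matrix

private lemma fin_ne_add_one' {m : ℕ} (a : Fin (m + 2)) : a ≠ a + 1 := by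
  intro h
  have h1 : (1 : Fin (m+2)) = 0 := add_eq_left.mp h.symm
  simp at h1

private lemma menelaus_det (n : ℕ) (ξ : Fin (n + 1) → ℝ) :
    (Matrix.of fun i j : Fin (n + 1) =>
      (if j = i then ξ i else 0) + (if j = i + 1 then 1 - ξ (i + 1) else 0)).det
    = ∏ i, ξ i + (-1 : ℝ) ^ n * ∏ i, (1 - ξ i) := by
  match n with
  | 0 =>
    rw [Matrix.det_fin_one]
    simp
  | (m + 1) =>
    set M : Matrix (Fin (m + 2)) (Fin (m + 2)) ℝ := Matrix.of fun i j : Fin (m + 2) =>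
      (if j = i then ξ i else 0) + (if j = i + 1 then 1 - ξ (i + 1) else 0) with hM'
    have hM : M = Matrix.of fun i j : Fin (m + 2) =>
      (if j = i then ξ i else 0) + (if j = i + 1 then 1 - ξ (i + 1) else 0) := hM'
    rw [Matrix.det_succ_column_zero]
    have h0l : (0 : Fin (m+2)) ≠ Fin.last (m+1) := by simp [Fin.ext_iff]
    rw [Finset.sum_eq_add_of_mem 0 (Fin.last (m+1)) (Finset.mem_univ _) (Finset.mem_univ _)
      h0l ?side]
    · have h00 : M 0 0 = ξ 0 := by
        have : (0 : Fin (m+2)) ≠ 0 + 1 := fin_ne_add_one' 0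
        simp [hM, this]
      have hlast1 : Fin.last (m+1) + 1 = 0 := by
        simp [Fin.ext_iff, Fin.val_add_one]
      have hl0 : M (Fin.last (m+1)) 0 = 1 - ξ 0 := by
        simp only [hM, Matrix.of_apply]
        rw [hlast1]
        simp [h0l]
      have hsub0 : (M.submatrix (Fin.succAbove 0) Fin.succ).det = ∏ i : Fin (m+1), ξ i.succ := by
        rw [Matrix.det_of_upperTriangular]
        · apply Finset.prod_congr rfl
          intro i _
          have : (i.succ : Fin (m+2)) ≠ i.succ + 1 := fin_ne_add_one' _
          simp [hM, Fin.succAbove_zero, this]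
        · intro i j hji
          have hji' : (j : ℕ) < i := hji
          have h1 : (j.succ : Fin (m+2)) ≠ i.succ := by
            simp [Fin.ext_iff]; omega
          have h2 : (j.succ : Fin (m+2)) ≠ i.succ + 1 := by
            intro h
            have hv : ((j.succ : Fin (m+2)) : ℕ) = (((i.succ : Fin (m+2)) + 1 : Fin (m+2)) : ℕ) :=
              congrArg Fin.val h
            rw [Fin.val_add_one] at hv
            have hj : ((j.succ : Fin (m+2)) : ℕ) = (j : ℕ) + 1 := rfl
            have hi : ((i.succ : Fin (m+2)) : ℕ) = (i : ℕ) + 1 := rfl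
            split at hv <;> omega
          simp [hM, Fin.succAbove_zero, h1, h2]
      have hsubl : (M.submatrix (Fin.succAbove (Fin.last (m+1))) Fin.succ).det
          = ∏ i : Fin (m+1), (1 - ξ i.succ) := by
        rw [Matrix.det_of_lowerTriangular]
        · apply Finset.prod_congr rfl
          intro i _
          have h1 : (i.succ : Fin (m+2)) ≠ i.castSucc := by simp [Fin.ext_iff]
          have h2 : (i.succ : Fin (m+2)) = i.castSucc + 1 := Fin.coeSucc_eq_succ.symm
          simp [hM, Fin.succAbove_last, h1, ← h2]
        · intro i j hij
          have hij' : (i : ℕ) < j := hij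
          have h1 : (j.succ : Fin (m+2)) ≠ i.castSucc := by
            simp [Fin.ext_iff]; omega
          have h2 : (j.succ : Fin (m+2)) ≠ i.castSucc + 1 := by
            rw [Fin.coeSucc_eq_succ]
            simp [Fin.ext_iff]; omega
          have h3 : j ≠ i := by omega
          simp [hM, Fin.succAbove_last, h1, h2, h3]
      rw [h00, hl0, hsub0, hsubl]
      rw [Fin.prod_univ_succ ξ, Fin.prod_univ_succ (fun i => 1 - ξ i)]
      simp [Fin.val_last]
      ring
    · intro c _ hc
      have hc0 : c ≠ 0 := hc.1
      have hcl : c ≠ Fin.last (m+1) := hc.2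
      have h1 : (0 : Fin (m+2)) ≠ c := fun h => hc0 h.symm
      have h2 : (0 : Fin (m+2)) ≠ c + 1 := by
        intro h
        apply hcl
        have h3 : c + 1 = 0 := h.symm
        have := congrArg (· - 1) h3
        simpa [Fin.ext_iff, sub_eq_iff_eq_add] using this
      simp [hM, h1, h2]

/-- The points `Q i = (1-ξ i) • P i + ξ i • P (i+1)` on the edges of a simplex in
general position admit a nontrivial affine dependence iff the cyclic linear system
`ξ i * α i + (1 - ξ (i+1)) * α (i+1) = 0` has a nontrivial solution, which happens
exactly when `∏ ξ i = (-1)^(n+1) * ∏ (1 - ξ i)`. -/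
theorem menelaus_linear_system (n : ℕ)
    (P : Fin (n + 1) → (Fin n → ℝ))
    (hgen : LinearIndependent ℝ (fun i : Fin n => P i.succ - P 0))
    (ξ : Fin (n + 1) → ℝ)
    (Q : Fin (n + 1) → (Fin n → ℝ))
    (hQ : ∀ i, Q i = (1 - ξ i) • P i + ξ i • P (i + 1)) :
    ((∃ α : Fin (n + 1) → ℝ, α ≠ 0 ∧ (∑ i, α i • Q i = 0) ∧ (∑ i, α i = 0)) ↔
      (∃ α : Fin (n + 1) → ℝ, α ≠ 0 ∧
        ∀ i, ξ i * α i + (1 - ξ (i + 1)) * α (i + 1) = 0)) ∧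
    ((∃ α : Fin (n + 1) → ℝ, α ≠ 0 ∧
        ∀ i, ξ i * α i + (1 - ξ (i + 1)) * α (i + 1) = 0) ↔
      (∏ i, ξ i) = (-1 : ℝ) ^ (n + 1) * ∏ i, (1 - ξ i)) := by
  -- rewrite the sum over Q in terms of the coefficients of P
  have key : ∀ α : Fin (n+1) → ℝ,
      ∑ i, α i • Q i = ∑ j, (ξ (j-1) * α (j-1) + (1 - ξ j) * α j) • P j := by
    intro α
    have h1 : ∀ i, α i • Q i = (α i * (1 - ξ i)) • P i + (α i * ξ i) • P (i+1) := by
      intro i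
      rw [hQ i, smul_add, smul_smul, smul_smul, mul_comm (α i) (1 - ξ i),
        mul_comm (α i) (ξ i), mul_comm (ξ i) (α i), mul_comm (1 - ξ i) (α i)]
    calc ∑ i, α i • Q i
        = ∑ i, ((α i * (1 - ξ i)) • P i + (α i * ξ i) • P (i+1)) :=
          Finset.sum_congr rfl (fun i _ => h1 i)
      _ = ∑ i, (α i * (1 - ξ i)) • P i + ∑ i, (α i * ξ i) • P (i+1) :=
          Finset.sum_add_distrib
      _ = ∑ j, (α j * (1 - ξ j)) • P j + ∑ j, (α (j-1) * ξ (j-1)) • P j := by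
          congr 1
          exact Fintype.sum_equiv (Equiv.addRight (1 : Fin (n+1))) _ _ (fun i => by simp)
      _ = ∑ j, (ξ (j-1) * α (j-1) + (1 - ξ j) * α j) • P j := by
          rw [← Finset.sum_add_distrib]
          apply Finset.sum_congr rfl
          intro j _
          rw [← add_smul]
          congr 1
          ring
  have sumβ : ∀ α : Fin (n+1) → ℝ,
      ∑ j, (ξ (j-1) * α (j-1) + (1 - ξ j) * α j) = ∑ j, α j := by
    intro α
    rw [Finset.sum_add_distrib]
    have h2 : ∑ j, ξ (j-1) * α (j-1) = ∑ i, ξ i * α i :=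
      (Fintype.sum_equiv (Equiv.addRight (1 : Fin (n+1))) _ _ (fun i => by simp)).symm
    rw [h2, ← Finset.sum_add_distrib]
    apply Finset.sum_congr rfl
    intro j _
    ring
  -- kernel of the points in general position
  have hker : ∀ b : Fin (n+1) → ℝ, (∑ j, b j • P j = 0) → (∑ j, b j = 0) → ∀ j, b j = 0 := by
    intro b hs ht
    have h1 : ∑ j, b j • (P j - P 0) = 0 := by
      have he : ∑ j, b j • (P j - P 0) = ∑ j, b j • P j - (∑ j, b j) • P 0 := by
        rw [Finset.sum_smul, ← Finset.sum_sub_distrib]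
        exact Finset.sum_congr rfl (fun j _ => smul_sub _ _ _)
      rw [he, hs, ht]
      simp
    have h2 : ∑ i : Fin n, b i.succ • (P i.succ - P 0) = 0 := by
      rw [Fin.sum_univ_succ] at h1
      simpa using h1
    have h3 : ∀ i : Fin n, b i.succ = 0 := by
      intro i
      exact linearIndependent_iff'.mp hgen Finset.univ (fun i => b i.succ) h2 i (Finset.mem_univ i)
    intro j
    rcases Fin.eq_zero_or_eq_succ j with h | ⟨i, rfl⟩
    · rw [h]
      have h4 : ∑ i : Fin n, b i.succ = 0 := Finset.sum_eq_zero (fun i _ => h3 i)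
      rw [Fin.sum_univ_succ] at ht
      rw [h4] at ht
      linarith
    · exact h3 i
  -- the cyclic system in the two indexings
  have hsys : ∀ α : Fin (n+1) → ℝ,
      (∀ i, ξ i * α i + (1 - ξ (i + 1)) * α (i + 1) = 0) ↔
      (∀ j, ξ (j-1) * α (j-1) + (1 - ξ j) * α j = 0) := by
    intro α
    constructor
    · intro h j
      have := h (j - 1)
      rwa [sub_add_cancel] at this
    · intro h i
      have := h (i + 1)
      rwa [add_sub_cancel_right] at this
  have part1 : ∀ α : Fin (n+1) → ℝ,
      ((∑ i, α i • Q i = 0) ∧ (∑ i, α i = 0)) ↔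
      (∀ i, ξ i * α i + (1 - ξ (i + 1)) * α (i + 1) = 0) := by
    intro α
    rw [hsys]
    constructor
    · rintro ⟨hs, ht⟩
      have hb : ∑ j, (ξ (j-1) * α (j-1) + (1 - ξ j) * α j) = 0 := by rw [sumβ]; exact ht
      have := hker (fun j => ξ (j-1) * α (j-1) + (1 - ξ j) * α j) (by rw [← key]; exact hs) hb
      exact this
    · intro h
      have hb : ∑ j, (ξ (j-1) * α (j-1) + (1 - ξ j) * α j) = 0 :=
        Finset.sum_eq_zero (fun j _ => h j)
      constructor
      · rw [key]
        exact Finset.sum_eq_zero (fun j _ => by rw [h j, zero_smul])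
      · rw [← sumβ α]; exact hb
  constructor
  · constructor
    · rintro ⟨α, hα, h⟩
      exact ⟨α, hα, (part1 α).mp h⟩
    · rintro ⟨α, hα, h⟩
      exact ⟨α, hα, (part1 α).mpr h⟩
  · -- second equivalence via determinants
    set M : Matrix (Fin (n + 1)) (Fin (n + 1)) ℝ := Matrix.of fun i j : Fin (n + 1) =>
      (if j = i then ξ i else 0) + (if j = i + 1 then 1 - ξ (i + 1) else 0) with hM
    have hmv : ∀ (α : Fin (n+1) → ℝ) i, (M *ᵥ α) i = ξ i * α i + (1 - ξ (i+1)) * α (i+1) := by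
      intro α i
      simp [hM, Matrix.mulVec, dotProduct, add_mul, Finset.sum_add_distrib]
    have hiff : (∃ α : Fin (n + 1) → ℝ, α ≠ 0 ∧
        ∀ i, ξ i * α i + (1 - ξ (i + 1)) * α (i + 1) = 0) ↔ (∃ v ≠ 0, M *ᵥ v = 0) := by
      constructor
      · rintro ⟨α, hα, h⟩
        exact ⟨α, hα, funext fun i => by rw [hmv]; exact h i⟩
      · rintro ⟨v, hv, h⟩
        exact ⟨v, hv, fun i => by rw [← hmv]; exact congrFun h i⟩
    rw [hiff, Matrix.exists_mulVec_eq_zero_iff, hM, menelaus_det]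
    rw [pow_succ]
    constructor
    · intro h
      linear_combination h
    · intro h
      linear_combination h
end

section
/- Let R^N carry a nondegenerate symmetric bilinear form ⟨·,·⟩ and let Q = {y : ⟨y,y⟩ = κ₀} be a quadric. Given y, y₁, y₂ ∈ Q with κ₀ ≠ ⟨y₁,y₂⟩, the point y₁₂ = y + a₁₂(y₂ - y₁) with a₁₂ = ⟨y, y₁ - y₂⟩/(κ₀ - ⟨y₁,y₂⟩) lies on Q, and a₁₂ is the unique nonzero value of a for which y + a(y₂ - y₁) ∈ Q (assuming ⟨y, y₁ - y₂⟩ ≠ 0). -/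
/-- Constructing the fourth vertex of a T-net quadrilateral in a quadric:
`y₁₂ = y + a₁₂ (y₂ - y₁)` with `a₁₂ = ⟨y, y₁-y₂⟩ / (κ₀ - ⟨y₁,y₂⟩)` lies on the
quadric, and `a₁₂` is the unique nonzero coefficient with this property. -/
theorem tnet_in_quadric_fourth_point (N : ℕ)
    (B : LinearMap.BilinForm ℝ (Fin N → ℝ))
    (hsymm : ∀ x y, B x y = B y x)
    (hnd : ∀ x, (∀ y, B x y = 0) → x = 0)
    (κ₀ : ℝ) (y y₁ y₂ : Fin N → ℝ)
    (hy : B y y = κ₀) (hy₁ : B y₁ y₁ = κ₀) (hy₂ : B y₂ y₂ = κ₀)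
    (hden : κ₀ - B y₁ y₂ ≠ 0) (hnum : B y (y₁ - y₂) ≠ 0) :
    B (y + (B y (y₁ - y₂) / (κ₀ - B y₁ y₂)) • (y₂ - y₁))
      (y + (B y (y₁ - y₂) / (κ₀ - B y₁ y₂)) • (y₂ - y₁)) = κ₀ ∧
    ∀ a : ℝ, a ≠ 0 → B (y + a • (y₂ - y₁)) (y + a • (y₂ - y₁)) = κ₀ →
      a = B y (y₁ - y₂) / (κ₀ - B y₁ y₂) := by
  have key : ∀ a : ℝ, B (y + a • (y₂ - y₁)) (y + a • (y₂ - y₁)) =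
      κ₀ + 2 * a * (a * (κ₀ - B y₁ y₂) - B y (y₁ - y₂)) := by
    intro a
    simp only [map_add, map_sub, map_smul, LinearMap.add_apply, LinearMap.sub_apply,
      LinearMap.smul_apply, smul_eq_mul]
    rw [hsymm y₁ y, hsymm y₂ y, hsymm y₂ y₁, hy, hy₁, hy₂]
    ring
  constructor
  · rw [key, div_mul_cancel₀ _ hden]
    ring
  · intro a ha hQ
    rw [key] at hQ
    have h : a * (κ₀ - B y₁ y₂) - B y (y₁ - y₂) = 0 := by
      rcases mul_eq_zero.mp (by linarith : 2 * a * (a * (κ₀ - B y₁ y₂) - B y (y₁ - y₂)) = 0) with h | h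
      · rcases mul_eq_zero.mp h with h' | h'
        · linarith
        · exact absurd h' ha
      · exact h
    rw [eq_div_iff hden]
    linarith
end

section
/- The star-triangle relations: given real numbers a₁₂, a₂₃, a₃₁ with a₁₂a₂₃ + a₂₃a₃₁ + a₃₁a₁₂ ≠ 0, the values A₂₃ = -a₂₃/(a₁₂a₂₃+a₂₃a₃₁+a₃₁a₁₂), A₃₁ = -a₃₁/(a₁₂a₂₃+a₂₃a₃₁+a₃₁a₁₂), A₁₂ = -a₁₂/(a₁₂a₂₃+a₂₃a₃₁+a₃₁a₁₂) form the unique solution of the six equations: 1 + A₂₃(a₁₂+a₃₁) = -A₃₁a₁₂ = -A₁₂a₃₁, 1 + A₃₁(a₂₃+a₁₂) = -A₁₂a₂₃ = -A₂₃a₁₂, 1 + A₁₂(a₂₃+a₃₁) = -A₂₃a₃₁ = -A₃₁a₂₃. -/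
/-!
The system is invariant under the cyclic relabelling `1 → 2 → 3 → 1`, and each of its solutions
satisfies `A₂₃ D = -a₂₃`, where `D = a₁₂ a₂₃ + a₂₃ a₃₁ + a₃₁ a₁₂`, as an explicit linear combination
of the equations. Rotating gives the other two coefficients, so for `D ≠ 0` the solution is unique;
that `-a_{jk} / D` does solve the system is a direct computation.
-/

variable {K : Type*} [Field K]

def IsStarTriangleSolution (a₁₂ a₂₃ a₃₁ A₂₃ A₃₁ A₁₂ : K) : Prop :=
  (1 + A₂₃ * (a₁₂ + a₃₁) = -A₃₁ * a₁₂ ∧ -A₃₁ * a₁₂ = -A₁₂ * a₃₁) ∧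
  (1 + A₃₁ * (a₂₃ + a₁₂) = -A₁₂ * a₂₃ ∧ -A₁₂ * a₂₃ = -A₂₃ * a₁₂) ∧
  (1 + A₁₂ * (a₂₃ + a₃₁) = -A₂₃ * a₃₁ ∧ -A₂₃ * a₃₁ = -A₃₁ * a₂₃)

namespace IsStarTriangleSolution

variable {a₁₂ a₂₃ a₃₁ A₂₃ A₃₁ A₁₂ : K}

theorem rotate (h : IsStarTriangleSolution a₁₂ a₂₃ a₃₁ A₂₃ A₃₁ A₁₂) :
    IsStarTriangleSolution a₂₃ a₃₁ a₁₂ A₃₁ A₁₂ A₂₃ := by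
  obtain ⟨h₁, h₂, h₃⟩ := h
  rw [add_comm a₂₃ a₃₁] at h₃
  rw [add_comm a₁₂ a₃₁] at h₁
  exact ⟨h₂, h₃, h₁⟩

theorem mul_denom_eq (h : IsStarTriangleSolution a₁₂ a₂₃ a₃₁ A₂₃ A₃₁ A₁₂) :
    A₂₃ * (a₁₂ * a₂₃ + a₂₃ * a₃₁ + a₃₁ * a₁₂) = -a₂₃ := by
  obtain ⟨-, ⟨e₂, e₂'⟩, -, e₃'⟩ := h
  linear_combination a₂₃ * e₂ + a₂₃ * e₂' - (a₂₃ + a₁₂) * e₃'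

theorem eq_div (h : IsStarTriangleSolution a₁₂ a₂₃ a₃₁ A₂₃ A₃₁ A₁₂)
    (hD : a₁₂ * a₂₃ + a₂₃ * a₃₁ + a₃₁ * a₁₂ ≠ 0) :
    A₂₃ = -a₂₃ / (a₁₂ * a₂₃ + a₂₃ * a₃₁ + a₃₁ * a₁₂) ∧
    A₃₁ = -a₃₁ / (a₁₂ * a₂₃ + a₂₃ * a₃₁ + a₃₁ * a₁₂) ∧
    A₁₂ = -a₁₂ / (a₁₂ * a₂₃ + a₂₃ * a₃₁ + a₃₁ * a₁₂) := by
  have hD₁ : a₂₃ * a₃₁ + a₃₁ * a₁₂ + a₁₂ * a₂₃ = a₁₂ * a₂₃ + a₂₃ * a₃₁ + a₃₁ * a₁₂ := by ring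
  have hD₂ : a₃₁ * a₁₂ + a₁₂ * a₂₃ + a₂₃ * a₃₁ = a₁₂ * a₂₃ + a₂₃ * a₃₁ + a₃₁ * a₁₂ := by ring
  have e₃₁ := h.rotate.mul_denom_eq
  have e₁₂ := h.rotate.rotate.mul_denom_eq
  rw [hD₁] at e₃₁
  rw [hD₂] at e₁₂
  exact ⟨eq_div_of_mul_eq hD h.mul_denom_eq, eq_div_of_mul_eq hD e₃₁, eq_div_of_mul_eq hD e₁₂⟩

end IsStarTriangleSolution

theorem isStarTriangleSolution_div {a₁₂ a₂₃ a₃₁ : K}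
    (hD : a₁₂ * a₂₃ + a₂₃ * a₃₁ + a₃₁ * a₁₂ ≠ 0) :
    IsStarTriangleSolution a₁₂ a₂₃ a₃₁ (-a₂₃ / (a₁₂ * a₂₃ + a₂₃ * a₃₁ + a₃₁ * a₁₂))
      (-a₃₁ / (a₁₂ * a₂₃ + a₂₃ * a₃₁ + a₃₁ * a₁₂)) (-a₁₂ / (a₁₂ * a₂₃ + a₂₃ * a₃₁ + a₃₁ * a₁₂)) := by
  set D := a₁₂ * a₂₃ + a₂₃ * a₃₁ + a₃₁ * a₁₂ with hD_def
  refine ⟨⟨?_, ?_⟩, ⟨?_, ?_⟩, ⟨?_, ?_⟩⟩ <;> field_simp <;> rw [hD_def] <;> ring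

/-- The star-triangle relations: explicit unique solution of the six linear
equations for the shifted coefficients of a T-net hexahedron. -/
theorem star_triangle_unique_solution (a₁₂ a₂₃ a₃₁ : ℝ)
    (hD : a₁₂ * a₂₃ + a₂₃ * a₃₁ + a₃₁ * a₁₂ ≠ 0) :
    (let D := a₁₂ * a₂₃ + a₂₃ * a₃₁ + a₃₁ * a₁₂
     let A₂₃ := -a₂₃ / D
     let A₃₁ := -a₃₁ / D
     let A₁₂ := -a₁₂ / D
     (1 + A₂₃ * (a₁₂ + a₃₁) = -A₃₁ * a₁₂ ∧ -A₃₁ * a₁₂ = -A₁₂ * a₃₁) ∧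
     (1 + A₃₁ * (a₂₃ + a₁₂) = -A₁₂ * a₂₃ ∧ -A₁₂ * a₂₃ = -A₂₃ * a₁₂) ∧
     (1 + A₁₂ * (a₂₃ + a₃₁) = -A₂₃ * a₃₁ ∧ -A₂₃ * a₃₁ = -A₃₁ * a₂₃)) ∧
    ∀ A₂₃ A₃₁ A₁₂ : ℝ,
      (1 + A₂₃ * (a₁₂ + a₃₁) = -A₃₁ * a₁₂ ∧ -A₃₁ * a₁₂ = -A₁₂ * a₃₁) →
      (1 + A₃₁ * (a₂₃ + a₁₂) = -A₁₂ * a₂₃ ∧ -A₁₂ * a₂₃ = -A₂₃ * a₁₂) →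
      (1 + A₁₂ * (a₂₃ + a₃₁) = -A₂₃ * a₃₁ ∧ -A₂₃ * a₃₁ = -A₃₁ * a₂₃) →
      A₂₃ = -a₂₃ / (a₁₂ * a₂₃ + a₂₃ * a₃₁ + a₃₁ * a₁₂) ∧
      A₃₁ = -a₃₁ / (a₁₂ * a₂₃ + a₂₃ * a₃₁ + a₃₁ * a₁₂) ∧
      A₁₂ = -a₁₂ / (a₁₂ * a₂₃ + a₂₃ * a₃₁ + a₃₁ * a₁₂) :=
  ⟨isStarTriangleSolution_div hD, fun _ _ _ h₁ h₂ h₃ => IsStarTriangleSolution.eq_div ⟨h₁, h₂, h₃⟩ hD⟩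
end

section
/- Let f, f₁, f₂, f₁₂ be four distinct points on a circle in the complex plane (identified with C), with cross-ratio q(f,f₁,f₁₂,f₂) = ((f₁-f)(f₁₂-f₂))/((f₁₂-f₁)(f₂-f)). Suppose there exist nonzero reals α₁, α₂ and a positive function s on the four vertices such that q = α₁/α₂. Then, setting α₁ = |f₁-f|²/(s s₁) = |f₁₂-f₂|²/(s₂ s₁₂) and α₂ = |f₂-f|²/(s s₂) = |f₁₂-f₁|²/(s₁ s₁₂), the identity α₁(f₁-f)^{-1} + α₂(f₁₂-f₁)^{-1} = α₂(f₂-f)^{-1} + α₁(f₁₂-f₂)^{-1} holds in C, provided f₁₂ + f ≠ f₁ + f₂. -/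
/-!
With edges `a = f₁ - f`, `b = f₁₂ - f₁`, `c = f₂ - f`, `d = f₁₂ - f₂` of the quadrilateral we have
`a + b = c + d`, hence `d - a = b - c`, and
`α₁ (a⁻¹ - d⁻¹) - α₂ (c⁻¹ - b⁻¹) = (d - a) (α₁ b c - α₂ a d) / (a b c d)`.
The factorized cross-ratio `a d / (b c) = α₁ / α₂` says exactly that `α₁ b c = α₂ a d`.
-/

theorem moutard_relation_of_cross_ratio_eq {K : Type*} [Field K] {a b c d α₁ α₂ : K}
    (ha : a ≠ 0) (hb : b ≠ 0) (hc : c ≠ 0) (hd : d ≠ 0) (hα₂ : α₂ ≠ 0)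
    (hclosed : a + b = c + d) (hq : a * d / (b * c) = α₁ / α₂) :
    α₁ * a⁻¹ + α₂ * b⁻¹ = α₂ * c⁻¹ + α₁ * d⁻¹ := by
  rw [div_eq_div_iff (mul_ne_zero hb hc) hα₂] at hq
  field_simp
  linear_combination (a - d) * hq - α₂ * a * d * hclosed

theorem isothermic_quad_moutard_relation_general
    (f f₁ f₂ f₁₂ : ℂ)
    (hd1 : f ≠ f₁) (hd2 : f ≠ f₂)
    (hd5 : f₁ ≠ f₁₂) (hd6 : f₂ ≠ f₁₂)
    (α₁ α₂ : ℝ) (hα₂ : α₂ ≠ 0)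
    (hq : (f₁ - f) * (f₁₂ - f₂) / ((f₁₂ - f₁) * (f₂ - f)) = ((α₁ / α₂ : ℝ) : ℂ)) :
    (α₁ : ℂ) * (f₁ - f)⁻¹ + (α₂ : ℂ) * (f₁₂ - f₁)⁻¹ =
      (α₂ : ℂ) * (f₂ - f)⁻¹ + (α₁ : ℂ) * (f₁₂ - f₂)⁻¹ := by
  rw [Complex.ofReal_div] at hq
  exact moutard_relation_of_cross_ratio_eq (sub_ne_zero.2 hd1.symm) (sub_ne_zero.2 hd5.symm)
    (sub_ne_zero.2 hd2.symm) (sub_ne_zero.2 hd6.symm) (Complex.ofReal_ne_zero.2 hα₂) (by ring) hq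

/-- For a concyclic quadrilateral `(f, f₁, f₁₂, f₂)` in `ℂ` with factorized real
cross-ratio `q = α₁/α₂` and discrete metric `s`, the Moutard-type relation
`α₁(f₁-f)⁻¹ + α₂(f₁₂-f₁)⁻¹ = α₂(f₂-f)⁻¹ + α₁(f₁₂-f₂)⁻¹` holds. -/
theorem isothermic_quad_moutard_relation
    (f f₁ f₂ f₁₂ : ℂ)
    (hd1 : f ≠ f₁) (hd2 : f ≠ f₂) (hd3 : f ≠ f₁₂)
    (hd4 : f₁ ≠ f₂) (hd5 : f₁ ≠ f₁₂) (hd6 : f₂ ≠ f₁₂)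
    (s s₁ s₂ s₁₂ : ℝ)
    (hs : 0 < s) (hs₁ : 0 < s₁) (hs₂ : 0 < s₂) (hs₁₂ : 0 < s₁₂)
    (α₁ α₂ : ℝ) (hα₁ : α₁ ≠ 0) (hα₂ : α₂ ≠ 0)
    (ha1 : α₁ = ‖f₁ - f‖ ^ 2 / (s * s₁))
    (ha1' : α₁ = ‖f₁₂ - f₂‖ ^ 2 / (s₂ * s₁₂))
    (ha2 : α₂ = ‖f₂ - f‖ ^ 2 / (s * s₂))
    (ha2' : α₂ = ‖f₁₂ - f₁‖ ^ 2 / (s₁ * s₁₂))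
    (hq : (f₁ - f) * (f₁₂ - f₂) / ((f₁₂ - f₁) * (f₂ - f)) = ((α₁ / α₂ : ℝ) : ℂ))
    (hgen : f₁₂ + f ≠ f₁ + f₂) :
    (α₁ : ℂ) * (f₁ - f)⁻¹ + (α₂ : ℂ) * (f₁₂ - f₁)⁻¹ =
      (α₂ : ℂ) * (f₂ - f)⁻¹ + (α₁ : ℂ) * (f₁₂ - f₂)⁻¹ :=
  isothermic_quad_moutard_relation_general f f₁ f₂ f₁₂ hd1 hd2 hd5 hd6 α₁ α₂ hα₂ hq
end

section
/- For four distinct complex numbers f, f₁, f₁₂, f₂ with f₁₂ + f ≠ f₁ + f₂ and nonzero reals α₁, α₂, the relation α₁/(f₁-f) + α₂/(f₁₂-f₁) = α₂/(f₂-f) + α₁/(f₁₂-f₂) holds if and only if the cross-ratio ((f₁-f)(f₁₂-f₂))/((f₁₂-f₁)(f₂-f)) equals α₁/α₂. -/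
/-! Write `a = f₁ - f`, `b = f₁₂ - f₁`, `c = f₂ - f`, `d = f₁₂ - f₂` for the edges of the
quadrilateral. Since `a + b = c + d`, both differences `1/a - 1/d` and `1/c - 1/b` carry the same
factor `s = b - c = d - a = f₁₂ + f - f₁ - f₂`, so for `s ≠ 0` the Moutard relation collapses to
`α₁ b c = α₂ a d`, which is the cross-ratio identity `a d / (b c) = α₁ / α₂` with denominators
cleared. -/

theorem div_add_div_eq_div_add_div_iff {K : Type*} [Field K] {a b c d x y : K}
    (ha : a ≠ 0) (hb : b ≠ 0) (hc : c ≠ 0) (hd : d ≠ 0)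
    (hsum : d - a = b - c) (hs : b - c ≠ 0) :
    x / a + y / b = y / c + x / d ↔ x * (b * c) = y * (a * d) := by
  rw [div_add_div _ _ ha hb, div_add_div _ _ hc hd, div_eq_div_iff (mul_ne_zero ha hb)
    (mul_ne_zero hc hd)]
  constructor
  · intro h
    refine mul_left_cancel₀ hs ?_
    linear_combination h - x * b * c * hsum
  · intro h
    linear_combination (b - c) * h + x * b * c * hsum

theorem moutard_relation_iff_cross_ratio_general
    (f f₁ f₂ f₁₂ : ℂ)
    (hd1 : f ≠ f₁) (hd2 : f ≠ f₂)
    (hd5 : f₁ ≠ f₁₂) (hd6 : f₂ ≠ f₁₂)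
    (hgen : f₁₂ + f ≠ f₁ + f₂)
    (α₁ α₂ : ℝ) (hα₂ : α₂ ≠ 0) :
    ((α₁ : ℂ) / (f₁ - f) + (α₂ : ℂ) / (f₁₂ - f₁) =
        (α₂ : ℂ) / (f₂ - f) + (α₁ : ℂ) / (f₁₂ - f₂)) ↔
      (f₁ - f) * (f₁₂ - f₂) / ((f₁₂ - f₁) * (f₂ - f)) = ((α₁ / α₂ : ℝ) : ℂ) := by
  have hb : f₁₂ - f₁ ≠ 0 := sub_ne_zero.2 hd5.symm
  have hc : f₂ - f ≠ 0 := sub_ne_zero.2 hd2.symm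
  have hs : f₁₂ - f₁ - (f₂ - f) ≠ 0 := by
    rw [show f₁₂ - f₁ - (f₂ - f) = f₁₂ + f - (f₁ + f₂) by ring]
    exact sub_ne_zero.2 hgen
  rw [div_add_div_eq_div_add_div_iff (sub_ne_zero.2 hd1.symm) hb hc (sub_ne_zero.2 hd6.symm)
      (by ring) hs, Complex.ofReal_div,
    div_eq_div_iff (mul_ne_zero hb hc) (Complex.ofReal_ne_zero.2 hα₂)]
  constructor <;> intro h <;> linear_combination -h

/-- The Moutard-type relation for a quadrilateral in `ℂ` is equivalent to the
factorization of its cross-ratio as `α₁/α₂`. -/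
theorem moutard_relation_iff_cross_ratio
    (f f₁ f₂ f₁₂ : ℂ)
    (hd1 : f ≠ f₁) (hd2 : f ≠ f₂) (hd3 : f ≠ f₁₂)
    (hd4 : f₁ ≠ f₂) (hd5 : f₁ ≠ f₁₂) (hd6 : f₂ ≠ f₁₂)
    (hgen : f₁₂ + f ≠ f₁ + f₂)
    (α₁ α₂ : ℝ) (hα₁ : α₁ ≠ 0) (hα₂ : α₂ ≠ 0) :
    ((α₁ : ℂ) / (f₁ - f) + (α₂ : ℂ) / (f₁₂ - f₁) =
        (α₂ : ℂ) / (f₂ - f) + (α₁ : ℂ) / (f₁₂ - f₂)) ↔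
      (f₁ - f) * (f₁₂ - f₂) / ((f₁₂ - f₁) * (f₂ - f)) = ((α₁ / α₂ : ℝ) : ℂ) :=
  moutard_relation_iff_cross_ratio_general f f₁ f₂ f₁₂ hd1 hd2 hd5 hd6 hgen α₁ α₂ hα₂
end

section
/- Let f₁, f₂, f₋₁, f₋₂ be four points in R³ spanning (together with the differences) a three-dimensional affine space, and let f_{ε₁,ε₂} be a point on the line f_{ε₁} f_{ε₂} for each sign pair (ε₁,ε₂) ∈ {±1}². Then the four points f_{1,2}, f_{1,-2}, f_{-1,-2}, f_{-1,2} lie in a common plane if and only if the product of the four ratios of directed lengths (|f₂f₁₂|/|f₁₂f₁|)·(|f₁f_{1,-2}|/|f_{1,-2}f₋₂|)·(|f₋₂f_{-1,-2}|/|f_{-1,-2}f₋₁|)·(|f₋₁f_{-1,2}|/|f_{-1,2}f₂|) equals 1. -/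
/-!
Take `f₂, f₁, f₋₂, f₋₁` as an affine basis of `ℝ³`. The barycentric coordinates of the four
points on the edges of the cycle `f₂ → f₁ → f₋₂ → f₋₁ → f₂` are the rows of a cyclic bidiagonal
matrix, with `1 - tᵢ` on the diagonal and `tᵢ` just right of it, whose determinant is
`∏ (1 - tᵢ) - ∏ tᵢ`. Four points of `ℝ³` are coplanar iff they are affinely dependent, i.e. iff
this matrix is singular, i.e. iff `∏ tᵢ / (1 - tᵢ) = 1`.
-/

open Module

section

variable {k V P : Type*} [Field k] [AddCommGroup V] [Module k V] [AddTorsor V P]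

theorem exists_affineSubspace_finrank_direction_le_iff_s8 [FiniteDimensional k V] (s : Set P)
    (n : ℕ) :
    (∃ S : AffineSubspace k P, finrank k S.direction ≤ n ∧ s ⊆ S) ↔
      finrank k (vectorSpan k s) ≤ n := by
  constructor
  · rintro ⟨S, hS, hsS⟩
    have hle : vectorSpan k s ≤ S.direction := S.direction_eq_vectorSpan ▸ vectorSpan_mono k hsS
    exact (Submodule.finrank_mono hle).trans hS
  · intro h
    exact ⟨affineSpan k s, by rwa [direction_affineSpan], subset_affineSpan k s⟩

theorem AffineBasis.affineIndependent_iff_det_toMatrix_ne_zero_s8 {ι : Type*} [Fintype ι]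
    [DecidableEq ι] (b : AffineBasis ι k P) (p : ι → P) :
    AffineIndependent k p ↔ (b.toMatrix p).det ≠ 0 := by
  have := b.finiteDimensional
  rw [← isUnit_iff_ne_zero, ← Matrix.isUnit_iff_isUnit_det, b.isUnit_toMatrix_iff, iff_self_and]
  intro hp
  rw [hp.affineSpan_eq_top_iff_card_eq_finrank_add_one, b.card_eq_finrank_add_one]

def Matrix.cyclicBidiagonal_s8 {n : ℕ} [NeZero n] (t : Fin n → k) : Matrix (Fin n) (Fin n) k :=
  of fun i j => if j = i then 1 - t i else if j = i + 1 then t i else 0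

theorem AffineBasis.toMatrix_lineMap_cycle {n : ℕ} (b : AffineBasis (Fin (n + 2)) k P)
    (t : Fin (n + 2) → k) :
    b.toMatrix (fun i => AffineMap.lineMap (b i) (b (i + 1)) (t i)) =
      Matrix.cyclicBidiagonal_s8 t := by
  ext i j
  have hi : i + 1 ≠ i := by simp
  simp only [AffineBasis.toMatrix_apply, AffineMap.apply_lineMap, AffineBasis.coord_apply,
    AffineMap.lineMap_apply_ring, Matrix.cyclicBidiagonal_s8, Matrix.of_apply]
  split_ifs <;> simp_all

theorem Matrix.det_cyclicBidiagonal_fin_four (t : Fin 4 → k) :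
    (cyclicBidiagonal_s8 t).det = ∏ i, (1 - t i) - ∏ i, t i := by
  simp [cyclicBidiagonal_s8, det_succ_row_zero, Fin.sum_univ_succ, Fin.succAbove,
    Fin.prod_univ_four]
  ring

theorem AffineBasis.finrank_vectorSpan_lineMap_cycle_le_two_iff (b : AffineBasis (Fin 4) k P)
    (t : Fin 4 → k) :
    finrank k (vectorSpan k (Set.range fun i => AffineMap.lineMap (b i) (b (i + 1)) (t i))) ≤ 2 ↔
      ∏ i, (1 - t i) = ∏ i, t i := by
  rw [finrank_vectorSpan_le_iff_not_affineIndependent k _ (Fintype.card_fin 4),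
    b.affineIndependent_iff_det_toMatrix_ne_zero_s8, b.toMatrix_lineMap_cycle,
    Matrix.det_cyclicBidiagonal_fin_four, not_not, sub_eq_zero]

end

theorem menelaus_coplanarity_general (f₁ f₂ fm₁ fm₂ : Fin 3 → ℝ)
    (hgen : AffineIndependent ℝ ![f₂, f₁, fm₂, fm₁])
    (a b c d : ℝ)
    (ha1 : a ≠ 1) (hb1 : b ≠ 1)
    (hc1 : c ≠ 1) (hd1 : d ≠ 1)
    (f₁₂ f₁m₂ fm₁m₂ fm₁₂ : Fin 3 → ℝ)
    (h12 : f₁₂ = (1 - a) • f₂ + a • f₁)          -- |f₂f₁₂| / |f₁₂f₁| = a/(1-a)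
    (h1m2 : f₁m₂ = (1 - b) • f₁ + b • fm₂)       -- |f₁f₁,₋₂| / |f₁,₋₂f₋₂| = b/(1-b)
    (hm1m2 : fm₁m₂ = (1 - c) • fm₂ + c • fm₁)    -- |f₋₂f₋₁,₋₂| / |f₋₁,₋₂f₋₁| = c/(1-c)
    (hm12 : fm₁₂ = (1 - d) • fm₁ + d • f₂) :     -- |f₋₁f₋₁,₂| / |f₋₁,₂f₂| = d/(1-d)
    (∃ s : AffineSubspace ℝ (Fin 3 → ℝ), Module.finrank ℝ s.direction ≤ 2 ∧
      f₁₂ ∈ s ∧ f₁m₂ ∈ s ∧ fm₁m₂ ∈ s ∧ fm₁₂ ∈ s) ↔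
    (a / (1 - a)) * (b / (1 - b)) * (c / (1 - c)) * (d / (1 - d)) = 1 := by
  let B : AffineBasis (Fin 4) ℝ (Fin 3 → ℝ) :=
    ⟨_, hgen, by rw [hgen.affineSpan_eq_top_iff_card_eq_finrank_add_one]; simp⟩
  have hpoints : (fun i => AffineMap.lineMap (B i) (B (i + 1)) (![a, b, c, d] i)) =
      ![f₁₂, f₁m₂, fm₁m₂, fm₁₂] := by
    ext1 i
    fin_cases i
    exacts [(AffineMap.lineMap_apply_module _ _ _).trans h12.symm,
      (AffineMap.lineMap_apply_module _ _ _).trans h1m2.symm,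
      (AffineMap.lineMap_apply_module _ _ _).trans hm1m2.symm,
      (AffineMap.lineMap_apply_module _ _ _).trans hm12.symm]
  have hmem : ∀ s : AffineSubspace ℝ (Fin 3 → ℝ),
      (f₁₂ ∈ s ∧ f₁m₂ ∈ s ∧ fm₁m₂ ∈ s ∧ fm₁₂ ∈ s) ↔ Set.range ![f₁₂, f₁m₂, fm₁m₂, fm₁₂] ⊆ s := by
    simp [Set.insert_subset_iff]
    tauto
  have hprod : (1 - a) * (1 - b) * (1 - c) * (1 - d) ≠ 0 := by
    simp [sub_eq_zero, ha1.symm, hb1.symm, hc1.symm, hd1.symm]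
  simp_rw [hmem]
  rw [exists_affineSubspace_finrank_direction_le_iff_s8, ← hpoints,
    B.finrank_vectorSpan_lineMap_cycle_le_two_iff]
  simp [Fin.prod_univ_four, div_mul_div_comm, div_eq_one_iff_eq hprod, eq_comm]

/-- The `n = 3` case of the generalized Menelaus theorem: given four points
`f₂, f₁, f₋₂, f₋₁` in general position in `ℝ³` and points on the four lines of the
cycle `f₂ → f₁ → f₋₂ → f₋₁ → f₂`, the four new points are coplanar iff the product
of the four ratios of directed lengths equals `1`. -/
theorem menelaus_coplanarity (f₁ f₂ fm₁ fm₂ : Fin 3 → ℝ)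
    (hgen : AffineIndependent ℝ ![f₂, f₁, fm₂, fm₁])
    (a b c d : ℝ)
    (ha0 : a ≠ 0) (ha1 : a ≠ 1) (hb0 : b ≠ 0) (hb1 : b ≠ 1)
    (hc0 : c ≠ 0) (hc1 : c ≠ 1) (hd0 : d ≠ 0) (hd1 : d ≠ 1)
    (f₁₂ f₁m₂ fm₁m₂ fm₁₂ : Fin 3 → ℝ)
    (h12 : f₁₂ = (1 - a) • f₂ + a • f₁)          -- |f₂f₁₂| / |f₁₂f₁| = a/(1-a)
    (h1m2 : f₁m₂ = (1 - b) • f₁ + b • fm₂)       -- |f₁f₁,₋₂| / |f₁,₋₂f₋₂| = b/(1-b)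
    (hm1m2 : fm₁m₂ = (1 - c) • fm₂ + c • fm₁)    -- |f₋₂f₋₁,₋₂| / |f₋₁,₋₂f₋₁| = c/(1-c)
    (hm12 : fm₁₂ = (1 - d) • fm₁ + d • f₂) :     -- |f₋₁f₋₁,₂| / |f₋₁,₂f₂| = d/(1-d)
    (∃ s : AffineSubspace ℝ (Fin 3 → ℝ), Module.finrank ℝ s.direction ≤ 2 ∧
      f₁₂ ∈ s ∧ f₁m₂ ∈ s ∧ fm₁m₂ ∈ s ∧ fm₁₂ ∈ s) ↔
    (a / (1 - a)) * (b / (1 - b)) * (c / (1 - c)) * (d / (1 - d)) = 1 :=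
  menelaus_coplanarity_general f₁ f₂ fm₁ fm₂ hgen a b c d ha1 hb1 hc1 hd1 f₁₂ f₁m₂ fm₁m₂ fm₁₂ h12
    h1m2 hm1m2 hm12
end

section
/- Let c : Z² → R³ and r : Z² → R (with r nowhere zero) be the centers and radii of an S-isothermic net, i.e., the lifts ŝ = (1/r)(c, 1, |c|² - r²) ∈ R^{4,1} satisfy the Moutard equation ŝ₁₂ - ŝ = a₁₂(ŝ₂ - ŝ₁) on each elementary quadrilateral. Then on each elementary quadrilateral: (c₁-c)/(r r₁) + (c₁₂-c₁)/(r₁ r₁₂) = (c₂-c)/(r r₂) + (c₁₂-c₂)/(r₂ r₁₂). Consequently the R³-valued discrete one-form δ_i c* = (c_i - c)/(r r_i) is closed. -/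
/-- For an S-isothermic net (Moutard lifts `ŝ = (1/r)(c, 1, |c|²-r²)` satisfy the
discrete Moutard equation), the `ℝ³`-valued one-form `δᵢc* = (cᵢ - c)/(r rᵢ)` is
closed: on each elementary quadrilateral
`(c₁-c)/(rr₁) + (c₁₂-c₁)/(r₁r₁₂) = (c₂-c)/(rr₂) + (c₁₂-c₂)/(r₂r₁₂)`. -/
theorem s_isothermic_dual_one_form_closed
    (c : ℤ × ℤ → EuclideanSpace ℝ (Fin 3)) (r : ℤ × ℤ → ℝ)
    (hr : ∀ u, r u ≠ 0)
    (S : ℤ × ℤ → EuclideanSpace ℝ (Fin 3) × ℝ × ℝ)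
    (hS : ∀ u, S u = ((r u)⁻¹ • c u, (r u)⁻¹, (r u)⁻¹ * (‖c u‖ ^ 2 - (r u) ^ 2)))
    (a : ℤ × ℤ → ℝ)
    (hMou : ∀ u : ℤ × ℤ,
      S (u.1 + 1, u.2 + 1) - S u =
        a u • (S (u.1, u.2 + 1) - S (u.1 + 1, u.2))) :
    ∀ u : ℤ × ℤ,
      (r u * r (u.1 + 1, u.2))⁻¹ • (c (u.1 + 1, u.2) - c u) +
        (r (u.1 + 1, u.2) * r (u.1 + 1, u.2 + 1))⁻¹ •
          (c (u.1 + 1, u.2 + 1) - c (u.1 + 1, u.2)) =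
      (r u * r (u.1, u.2 + 1))⁻¹ • (c (u.1, u.2 + 1) - c u) +
        (r (u.1, u.2 + 1) * r (u.1 + 1, u.2 + 1))⁻¹ •
          (c (u.1 + 1, u.2 + 1) - c (u.1, u.2 + 1)) := by
  intro u
  have hM := hMou u
  have h1 := congrArg Prod.fst hM
  have h2 := congrArg (fun p => p.2.1) hM
  simp only [hS, Prod.fst_sub, Prod.snd_sub, Prod.smul_fst, Prod.smul_snd] at h1 h2
  -- notation
  set ρ := (r u)⁻¹ with hρ
  set ρ1 := (r (u.1 + 1, u.2))⁻¹ with hρ1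
  set ρ2 := (r (u.1, u.2 + 1))⁻¹ with hρ2
  set ρ12 := (r (u.1 + 1, u.2 + 1))⁻¹ with hρ12
  have h1' : ρ12 • c (u.1 + 1, u.2 + 1) - ρ • c u =
      a u • (ρ2 • c (u.1, u.2 + 1) - ρ1 • c (u.1 + 1, u.2)) := h1
  have h2' : ρ12 - ρ = a u * (ρ2 - ρ1) := h2
  have e1 : (r u * r (u.1 + 1, u.2))⁻¹ = ρ * ρ1 := by rw [mul_inv]
  have e2 : (r (u.1 + 1, u.2) * r (u.1 + 1, u.2 + 1))⁻¹ = ρ1 * ρ12 := by rw [mul_inv]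
  have e3 : (r u * r (u.1, u.2 + 1))⁻¹ = ρ * ρ2 := by rw [mul_inv]
  have e4 : (r (u.1, u.2 + 1) * r (u.1 + 1, u.2 + 1))⁻¹ = ρ2 * ρ12 := by rw [mul_inv]
  rw [e1, e2, e3, e4]
  linear_combination (norm := module) (ρ1 - ρ2) • h1' + h2' • (ρ2 • c (u.1, u.2 + 1) - ρ1 • c (u.1 + 1, u.2))
end

section
/- Let c, c₁, c₂, c₁₂ ∈ R³ and nonzero reals r, r₁, r₂, r₁₂ satisfy (c₁-c)/(rr₁) + (c₁₂-c₁)/(r₁r₁₂) = (c₂-c)/(rr₂) + (c₁₂-c₂)/(r₂r₁₂) and the analogous scalar relation (|c₁|²-r₁²-|c|²+r²)/(rr₁) + (|c₁₂|²-r₁₂²-|c₁|²+r₁²)/(r₁r₁₂) = (|c₂|²-r₂²-|c|²+r²)/(rr₂) + (|c₁₂|²-r₁₂²-|c₂|²+r₂²)/(r₂r₁₂). Define c*ᵢ - c* = (cᵢ-c)/(rrᵢ) etc. (closed one-form integrated over the quadrilateral) and r* = 1/r at each vertex. Then the analogous scalar relation holds for (c*, r*): the one-form δᵢw* = δᵢ(|c*|²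 - (r*)²)/(r* rᵢ*) is closed around the quadrilateral, i.e., δ₁w* + τ₁δ₂w* = δ₂w* + τ₂δ₁w*. -/
open scoped RealInnerProductSpace

/-- Key edge identity: `δw* = 2⟨v,vs⟩ - 2⟨u,us⟩ - δw` on each edge. -/
lemma s_isothermic_edge_key (u v us vs : EuclideanSpace ℝ (Fin 3)) (r s : ℝ)
    (hr : r ≠ 0) (hs : s ≠ 0) (h : vs - us = (r * s)⁻¹ • (v - u)) :
    (‖vs‖ ^ 2 - (s⁻¹) ^ 2 - ‖us‖ ^ 2 + (r⁻¹) ^ 2) / (r⁻¹ * s⁻¹) =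
      2 * ⟪v, vs⟫ - 2 * ⟪u, us⟫ -
        (‖v‖ ^ 2 - s ^ 2 - ‖u‖ ^ 2 + r ^ 2) / (r * s) := by
  have grs : r * s ≠ 0 := mul_ne_zero hr hs
  have h' : v - u = (r * s) • (vs - us) := by
    rw [h, smul_smul, mul_inv_cancel₀ grs, one_smul]
  have e1 : ⟪vs + us, v - u⟫ = (r * s) * ⟪vs + us, vs - us⟫ := by
    rw [h', real_inner_smul_right]
  have e2 : ⟪v + u, v - u⟫ = (r * s) * ⟪v + u, vs - us⟫ := by
    rw [h', real_inner_smul_right]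
  simp only [inner_add_left, inner_sub_right, real_inner_self_eq_norm_sq,
    real_inner_comm v vs, real_inner_comm u vs, real_inner_comm v us,
    real_inner_comm u us, real_inner_comm vs us, real_inner_comm v u] at e1 e2
  set a := ⟪v, vs⟫ with ha
  set p := ⟪v, us⟫ with hp
  set q := ⟪u, vs⟫ with hq
  set b := ⟪u, us⟫ with hb
  clear_value a p q b
  have hvs : ‖vs‖ ^ 2 = ‖us‖ ^ 2 + (a + p - q - b) / (r * s) := by
    have key : (‖vs‖ ^ 2 - ‖us‖ ^ 2) * (r * s) = a + p - q - b := by linarith [e1]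
    field_simp
    linear_combination key
  have hv : ‖v‖ ^ 2 = ‖u‖ ^ 2 + (r * s) * (a + q - p - b) := by linarith [e2]
  rw [hvs, hv]
  field_simp
  ring

/-- Duality of S-isothermic nets: if the vector one-form `δᵢc* = δᵢc/(rrᵢ)` and the
scalar one-form `δᵢw = δᵢ(|c|²-r²)/(rrᵢ)` are closed around a quadrilateral, then the
scalar one-form `δᵢw* = δᵢ(|c*|²-(r*)²)/(r* rᵢ*)` of the dual data `r* = 1/r`,
`δᵢc* = δᵢc/(rrᵢ)` is also closed. -/
theorem s_isothermic_dual_scalar_form_closed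
    (c c₁ c₂ c₁₂ : EuclideanSpace ℝ (Fin 3))
    (r r₁ r₂ r₁₂ : ℝ)
    (hr : r ≠ 0) (hr₁ : r₁ ≠ 0) (hr₂ : r₂ ≠ 0) (hr₁₂ : r₁₂ ≠ 0)
    (hvec : (r * r₁)⁻¹ • (c₁ - c) + (r₁ * r₁₂)⁻¹ • (c₁₂ - c₁) =
            (r * r₂)⁻¹ • (c₂ - c) + (r₂ * r₁₂)⁻¹ • (c₁₂ - c₂))
    (hscal : (‖c₁‖ ^ 2 - r₁ ^ 2 - ‖c‖ ^ 2 + r ^ 2) / (r * r₁) +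
               (‖c₁₂‖ ^ 2 - r₁₂ ^ 2 - ‖c₁‖ ^ 2 + r₁ ^ 2) / (r₁ * r₁₂) =
             (‖c₂‖ ^ 2 - r₂ ^ 2 - ‖c‖ ^ 2 + r ^ 2) / (r * r₂) +
               (‖c₁₂‖ ^ 2 - r₁₂ ^ 2 - ‖c₂‖ ^ 2 + r₂ ^ 2) / (r₂ * r₁₂))
    (cs cs₁ cs₂ cs₁₂ : EuclideanSpace ℝ (Fin 3))
    (hcs₁ : cs₁ - cs = (r * r₁)⁻¹ • (c₁ - c))
    (hcs₂ : cs₂ - cs = (r * r₂)⁻¹ • (c₂ - c))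
    (hcs₁₂ : cs₁₂ - cs₁ = (r₁ * r₁₂)⁻¹ • (c₁₂ - c₁))
    (hcs₁₂' : cs₁₂ - cs₂ = (r₂ * r₁₂)⁻¹ • (c₁₂ - c₂))
    (rs rs₁ rs₂ rs₁₂ : ℝ)
    (hrs : rs = r⁻¹) (hrs₁ : rs₁ = r₁⁻¹) (hrs₂ : rs₂ = r₂⁻¹) (hrs₁₂ : rs₁₂ = r₁₂⁻¹) :
    (‖cs₁‖ ^ 2 - rs₁ ^ 2 - ‖cs‖ ^ 2 + rs ^ 2) / (rs * rs₁) +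
      (‖cs₁₂‖ ^ 2 - rs₁₂ ^ 2 - ‖cs₁‖ ^ 2 + rs₁ ^ 2) / (rs₁ * rs₁₂) =
    (‖cs₂‖ ^ 2 - rs₂ ^ 2 - ‖cs‖ ^ 2 + rs ^ 2) / (rs * rs₂) +
      (‖cs₁₂‖ ^ 2 - rs₁₂ ^ 2 - ‖cs₂‖ ^ 2 + rs₂ ^ 2) / (rs₂ * rs₁₂) := by
  subst hrs hrs₁ hrs₂ hrs₁₂
  rw [s_isothermic_edge_key c c₁ cs cs₁ r r₁ hr hr₁ hcs₁,
      s_isothermic_edge_key c₁ c₁₂ cs₁ cs₁₂ r₁ r₁₂ hr₁ hr₁₂ hcs₁₂,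
      s_isothermic_edge_key c c₂ cs cs₂ r r₂ hr hr₂ hcs₂,
      s_isothermic_edge_key c₂ c₁₂ cs₂ cs₁₂ r₂ r₁₂ hr₂ hr₁₂ hcs₁₂']
  linarith [hscal]
end

section
/- Let ŝ, ŝ₁, ŝ₂, ŝ₁₂ be vectors in R^{4,1} (Minkowski space with a symmetric bilinear form of signature (4,1)) with ⟨ŝᵢ,ŝᵢ⟩ = 1 for all four, satisfying the touching conditions ⟨ŝ,ŝ₁⟩ = ⟨ŝ₂,ŝ₁₂⟩ = -1 and ⟨ŝ,ŝ₂⟩ = ⟨ŝ₁,ŝ₁₂⟩ = 1. Assume they are linearly dependent via ŝ₁₂ = λŝ + μŝ₁ + νŝ₂, and assume ⟨ŝ,ŝ₁₂⟩ ≠ ±1 and ⟨ŝ₁,ŝ₂⟩ ≠ ±1. Then λ = 1 and μ = -ν = 2/(1-⟨ŝ₁,ŝ₂⟩), i.e., ŝ₁₂ - ŝ = a₁₂(ŝ₂ - ŝ₁) with a₁₂ = -2/(1-⟨ŝ₁,ŝ₂⟩). -/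
/-- The Minkowski bilinear form of signature (4,1) on `ℝ⁵`. -/
def minkB (x y : Fin 5 → ℝ) : ℝ :=
  x 0 * y 0 + x 1 * y 1 + x 2 * y 2 + x 3 * y 3 - x 4 * y 4

lemma minkB_symm (x y : Fin 5 → ℝ) : minkB x y = minkB y x := by
  simp [minkB]; ring

/-- Four pairwise touching spheres (lifted to the hyperboloid `⟨ξ,ξ⟩ = 1` in
`ℝ^{4,1}`) that are linearly dependent necessarily satisfy a Moutard-shaped
relation: `λ = 1`, `μ = -ν = 2/(1 - ⟨ŝ₁,ŝ₂⟩)`, i.e.,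
`ŝ₁₂ - ŝ = a₁₂(ŝ₂ - ŝ₁)` with `a₁₂ = -2/(1 - ⟨ŝ₁,ŝ₂⟩)`. -/
theorem touching_spheres_moutard
    (s s₁ s₂ s₁₂ : Fin 5 → ℝ)
    (hs : minkB s s = 1) (hs₁ : minkB s₁ s₁ = 1)
    (hs₂ : minkB s₂ s₂ = 1) (hs₁₂ : minkB s₁₂ s₁₂ = 1)
    (ht1 : minkB s s₁ = -1) (ht2 : minkB s₂ s₁₂ = -1)
    (ht3 : minkB s s₂ = 1) (ht4 : minkB s₁ s₁₂ = 1)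
    (l μ ν : ℝ) (hdep : s₁₂ = l • s + μ • s₁ + ν • s₂)
    (hg1 : minkB s s₁₂ ≠ 1) (hg1' : minkB s s₁₂ ≠ -1)
    (hg2 : minkB s₁ s₂ ≠ 1) (hg2' : minkB s₁ s₂ ≠ -1) :
    l = 1 ∧ μ = 2 / (1 - minkB s₁ s₂) ∧ ν = -μ ∧
      s₁₂ - s = (-2 / (1 - minkB s₁ s₂)) • (s₂ - s₁) := by
  have bil : ∀ x : Fin 5 → ℝ,
      minkB x s₁₂ = l * minkB x s + μ * minkB x s₁ + ν * minkB x s₂ := by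
    intro x
    rw [hdep]
    simp only [minkB, Pi.add_apply, Pi.smul_apply, smul_eq_mul]
    ring
  set p := minkB s₁ s₂ with hp
  set q := minkB s s₁₂ with hq
  have e1 : q = l - μ + ν := by
    have := bil s; rw [hs, ht1, ht3] at this; linarith
  have e2 : 1 = -l + μ + ν * p := by
    have := bil s₁
    rw [minkB_symm s₁ s, ht1, hs₁, ht4] at this; linarith
  have e3 : -1 = l + μ * p + ν := by
    have := bil s₂
    rw [minkB_symm s₂ s, ht3, minkB_symm s₂ s₁, ← hp, ht2, hs₂] at this
    linarith
  have e4 : 1 = l * q + μ - ν := by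
    have := bil s₁₂
    rw [minkB_symm s₁₂ s, minkB_symm s₁₂ s₁, minkB_symm s₁₂ s₂, ht4, ht2, hs₁₂] at this
    linarith
  have hl : l = 1 := by
    have key : (l - 1) * (q + 1) = 0 := by nlinarith [e1, e4]
    rcases mul_eq_zero.mp key with h | h
    · linarith
    · exact absurd (by linarith : q = -1) hg1'
  subst hl
  have hνμ : ν = -μ := by
    have key : (μ + ν) * (1 + p) = 0 := by nlinarith [e2, e3]
    rcases mul_eq_zero.mp key with h | h
    · linarith
    · exact absurd (by linarith : p = -1) hg2'
  have hp1 : 1 - p ≠ 0 := fun h => hg2 (by linarith)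
  have hμ : μ = 2 / (1 - p) := by
    rw [eq_div_iff hp1]
    nlinarith [e2, e3]
  refine ⟨rfl, hμ, hνμ, ?_⟩
  funext i
  have : s₁₂ i = s i + μ * s₁ i + ν * s₂ i := by
    rw [hdep]; simp [smul_eq_mul]
  simp only [Pi.sub_apply, Pi.smul_apply, smul_eq_mul, this, hνμ, hμ]
  field_simp
  ring
end

section
/- Suppose y : Z³ → R^N satisfies the Moutard equations y_{ij} - y = a_{ij}(y_j - y_i) on all three faces of an elementary cube adjacent to the vertex y, with a_{ij} = -a_{ji}, and y, y₁, y₂, y₃ lie on the quadric Q = {x : ⟨x,x⟩ = κ₀} for a nondegenerate symmetric bilinear form, with a_{ij} = ⟨y, y_i - y_j⟩/(κ₀ - ⟨y_i, y_j⟩). If D := a₁₂a₂₃ + a₃₁a₁₂ + a₂₃a₃₁ ≠ 0, then the unique point y₁₂₃ closing the T-net hexahedron also lies on Q. -/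
lemma tnet_core (k q12 q23 q31 a12 a23 a31 D A p1 p2 p3 : ℝ)
    (hr12 : a12*(k-q12) = p1-p2) (hr23 : a23*(k-q23) = p2-p3) (hr31 : a31*(k-q31) = p3-p1)
    (hDdef : D = a12*a23 + a31*a12 + a23*a31) (hDne : D ≠ 0)
    (hAD : A*D = -a23) :
    (1+A*(a12+a31))^2*k + (A*a12)^2*k + (A*a31)^2*k
      - 2*(1+A*(a12+a31))*(A*a12)*q12 - 2*(1+A*(a12+a31))*(A*a31)*q31
      + 2*(A*a12)*(A*a31)*q23 = k := by
  set α := 1+A*(a12+a31) with hα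
  set β := A*a12 with hβ
  set γ := A*a31 with hγ
  have hαD : α * D = a12 * a31 := by
    rw [hα]; linear_combination (a12+a31) * hAD + hDdef
  have e4 : β*γ = -(α*A*a23) := by
    apply mul_right_cancel₀ hDne
    rw [hβ, hγ]
    linear_combination A*a12*a31*hAD + A*a23*hαD
  have key : α*β*(k-q12) + α*γ*(k-q31) = β*γ*(k-q23) := by
    calc α*β*(k-q12) + α*γ*(k-q31)
        = α*A*(a12*(k-q12)) + α*A*(a31*(k-q31)) := by rw [hβ, hγ]; ring
      _ = α*A*(p1-p2) + α*A*(p3-p1) := by rw [hr12, hr31]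
      _ = -(α*A)*(a23*(k-q23)) := by rw [hr23]; ring
      _ = β*γ*(k-q23) := by rw [e4]; ring
  have halmost : α - β - γ = 1 := by rw [hα, hβ, hγ]; ring
  linear_combination 2*key + (α-β-γ+1)*k*halmost

/-- 3D consistency of T-nets in quadrics: if `y, y₁, y₂, y₃` lie on the quadric
`⟨x,x⟩ = κ₀` and the coefficients `a_{ij}` are given by the quadric condition, then
the unique point `y₁₂₃` closing the T-net hexahedron also lies on the quadric. -/
theorem tnet_in_quadric_3d_consistent (N : ℕ)
    (B : LinearMap.BilinForm ℝ (Fin N → ℝ))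
    (hsymm : ∀ x y, B x y = B y x)
    (hnd : ∀ x, (∀ y, B x y = 0) → x = 0)
    (κ₀ : ℝ) (y y₁ y₂ y₃ : Fin N → ℝ)
    (hy : B y y = κ₀) (hy₁ : B y₁ y₁ = κ₀) (hy₂ : B y₂ y₂ = κ₀) (hy₃ : B y₃ y₃ = κ₀)
    (h12 : κ₀ - B y₁ y₂ ≠ 0) (h23 : κ₀ - B y₂ y₃ ≠ 0) (h31 : κ₀ - B y₃ y₁ ≠ 0) :
    let a₁₂ := B y (y₁ - y₂) / (κ₀ - B y₁ y₂)
    let a₂₃ := B y (y₂ - y₃) / (κ₀ - B y₂ y₃)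
    let a₃₁ := B y (y₃ - y₁) / (κ₀ - B y₃ y₁)
    ∀ hD : a₁₂ * a₂₃ + a₃₁ * a₁₂ + a₂₃ * a₃₁ ≠ 0,
    let D := a₁₂ * a₂₃ + a₃₁ * a₁₂ + a₂₃ * a₃₁
    let A₂₃ := -a₂₃ / D
    let y₁₂₃ := (1 + A₂₃ * (a₁₂ + a₃₁)) • y₁ - (A₂₃ * a₁₂) • y₂ - (A₂₃ * a₃₁) • y₃
    B y₁₂₃ y₁₂₃ = κ₀ := by
  intro a₁₂ a₂₃ a₃₁ hD D A₂₃ y₁₂₃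
  have s21 : B y₂ y₁ = B y₁ y₂ := hsymm _ _
  have s32 : B y₃ y₂ = B y₂ y₃ := hsymm _ _
  have s13 : B y₁ y₃ = B y₃ y₁ := hsymm _ _
  have expand : B y₁₂₃ y₁₂₃ =
      (1 + A₂₃ * (a₁₂ + a₃₁))^2 * κ₀ + (A₂₃ * a₁₂)^2 * κ₀ + (A₂₃ * a₃₁)^2 * κ₀
      - 2 * (1 + A₂₃ * (a₁₂ + a₃₁)) * (A₂₃ * a₁₂) * B y₁ y₂
      - 2 * (1 + A₂₃ * (a₁₂ + a₃₁)) * (A₂₃ * a₃₁) * B y₃ y₁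
      + 2 * (A₂₃ * a₁₂) * (A₂₃ * a₃₁) * B y₂ y₃ := by
    simp only [y₁₂₃, map_sub, map_smul, LinearMap.sub_apply, LinearMap.smul_apply,
      smul_eq_mul, hy₁, hy₂, hy₃, s21, s32, s13]
    ring
  rw [expand]
  have hr12 : a₁₂ * (κ₀ - B y₁ y₂) = B y y₁ - B y y₂ := by
    show B y (y₁ - y₂) / (κ₀ - B y₁ y₂) * (κ₀ - B y₁ y₂) = _
    rw [div_mul_cancel₀ _ h12, map_sub]
  have hr23 : a₂₃ * (κ₀ - B y₂ y₃) = B y y₂ - B y y₃ := by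
    show B y (y₂ - y₃) / (κ₀ - B y₂ y₃) * (κ₀ - B y₂ y₃) = _
    rw [div_mul_cancel₀ _ h23, map_sub]
  have hr31 : a₃₁ * (κ₀ - B y₃ y₁) = B y y₃ - B y y₁ := by
    show B y (y₃ - y₁) / (κ₀ - B y₃ y₁) * (κ₀ - B y₃ y₁) = _
    rw [div_mul_cancel₀ _ h31, map_sub]
  have hDne : D ≠ 0 := hD
  have hAD : A₂₃ * D = -a₂₃ := by
    show -a₂₃ / D * D = -a₂₃
    exact div_mul_cancel₀ _ hDne
  have h := tnet_core κ₀ (B y₁ y₂) (B y₂ y₃) (B y₃ y₁) a₁₂ a₂₃ a₃₁ D A₂₃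
    (B y y₁) (B y y₂) (B y y₃) hr12 hr23 hr31 rfl hDne hAD
  linarith [h]
end

section
/- Consider a triangle f₋₁ f₂ f₁ in the plane and a triangle f₋₁ f₋₂ f₁ sharing the side f₋₁f₁. Let f₁₂ on line f₂f₁, f₋₁,₂ on line f₋₁f₂, f₁,₋₂ on line f₋₂f₁, f₋₁,₋₂ on line f₋₁f₋₂. Then the lines f₋₁,₂ f₁₂ and f₋₁,₋₂ f₁,₋₂ meet the line f₋₁f₁ at the same point if and only if (|f₂f₁₂|/|f₁₂f₁|)·(|f₋₁f₋₁,₂|/|f₋₁,₂f₂|) = (|f₋₂f₁,₋₂|/|f₁,₋₂f₁|)·(|f₋₁f₋₁,₋₂|/|f₋₁,₋₂f₋₂|), where all quotients are of directed lengths (assuming neither line is parallel to f₋₁f₁ and all points and ratios are well defined). -/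
lemma aux_indep (p0 p1 p2 : Fin 2 → ℝ) (h : AffineIndependent ℝ ![p0, p1, p2]) :
    ∀ x y : ℝ, x • (p1 - p0) + y • (p2 - p0) = 0 → x = 0 ∧ y = 0 := by
  intro x y hxy
  rw [affineIndependent_iff] at h
  have h0 := h Finset.univ ![-(x+y), x, y] (by simp [Fin.sum_univ_three]) (by
    simp only [Fin.sum_univ_three, Matrix.cons_val_zero, Matrix.cons_val_one, Matrix.head_cons,
      Matrix.cons_val_two, Matrix.tail_cons]
    linear_combination (norm := module) hxy)
  exact ⟨by simpa using h0 1 (by simp), by simpa using h0 2 (by simp)⟩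

/-- Double Menelaus: for two triangles `f₋₁ f₂ f₁` and `f₋₁ f₋₂ f₁` sharing the side
`f₋₁ f₁`, the lines `f₋₁,₂ f₁₂` and `f₋₁,₋₂ f₁,₋₂` meet the line `f₋₁ f₁` at the same
point iff the corresponding products of ratios of directed lengths agree. -/
theorem double_menelaus (fm₁ f₁ f₂ fm₂ : Fin 2 → ℝ)
    (htri1 : AffineIndependent ℝ ![fm₁, f₂, f₁])
    (htri2 : AffineIndependent ℝ ![fm₁, fm₂, f₁])
    (a b c d : ℝ)
    (ha0 : a ≠ 0) (ha1 : a ≠ 1) (hb0 : b ≠ 0) (hb1 : b ≠ 1)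
    (hc0 : c ≠ 0) (hc1 : c ≠ 1) (hd0 : d ≠ 0) (hd1 : d ≠ 1)
    (f₁₂ fm₁₂ f₁m₂ fm₁m₂ : Fin 2 → ℝ)
    (h12 : f₁₂ = AffineMap.lineMap f₂ f₁ a)        -- |f₂f₁₂| / |f₁₂f₁| = a/(1-a)
    (hm12 : fm₁₂ = AffineMap.lineMap fm₁ f₂ b)     -- |f₋₁f₋₁,₂| / |f₋₁,₂f₂| = b/(1-b)
    (h1m2 : f₁m₂ = AffineMap.lineMap fm₂ f₁ c)     -- |f₋₂f₁,₋₂| / |f₁,₋₂f₁| = c/(1-c)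
    (hm1m2 : fm₁m₂ = AffineMap.lineMap fm₁ fm₂ d)  -- |f₋₁f₋₁,₋₂| / |f₋₁,₋₂f₋₂| = d/(1-d)
    -- neither of the two lines is parallel to the line f₋₁ f₁:
    (hmeet1 : ∃ X, (∃ t : ℝ, X = AffineMap.lineMap fm₁ f₁ t) ∧
        ∃ t : ℝ, X = AffineMap.lineMap fm₁₂ f₁₂ t)
    (hmeet2 : ∃ X, (∃ t : ℝ, X = AffineMap.lineMap fm₁ f₁ t) ∧
        ∃ t : ℝ, X = AffineMap.lineMap fm₁m₂ f₁m₂ t) :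
    (∃ X, (∃ t : ℝ, X = AffineMap.lineMap fm₁ f₁ t) ∧
        (∃ t : ℝ, X = AffineMap.lineMap fm₁₂ f₁₂ t) ∧
        ∃ t : ℝ, X = AffineMap.lineMap fm₁m₂ f₁m₂ t) ↔
    (a / (1 - a)) * (b / (1 - b)) = (c / (1 - c)) * (d / (1 - d)) := by
  have key1 := aux_indep _ _ _ htri1
  have key2 := aux_indep _ _ _ htri2
  subst h12 hm12 h1m2 hm1m2
  simp only [AffineMap.lineMap_apply_module] at *
  have ha1' : (1:ℝ) - a ≠ 0 := sub_ne_zero.mpr (Ne.symm ha1)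
  have hb1' : (1:ℝ) - b ≠ 0 := sub_ne_zero.mpr (Ne.symm hb1)
  have hc1' : (1:ℝ) - c ≠ 0 := sub_ne_zero.mpr (Ne.symm hc1)
  have hd1' : (1:ℝ) - d ≠ 0 := sub_ne_zero.mpr (Ne.symm hd1)
  -- extract the scalar equations from a meeting point on line 1
  have extr1 : ∀ (t s : ℝ), (1-t) • fm₁ + t • f₁ =
      (1-s) • ((1-b) • fm₁ + b • f₂) + s • ((1-a) • f₂ + a • f₁) →
      ((1-s)*b + s*(1-a) = 0 ∧ s*a - t = 0) := by
    intro t s hX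
    exact key1 _ _ (by linear_combination (norm := module) -hX)
  have extr2 : ∀ (t s : ℝ), (1-t) • fm₁ + t • f₁ =
      (1-s) • ((1-d) • fm₁ + d • fm₂) + s • ((1-c) • fm₂ + c • f₁) →
      ((1-s)*d + s*(1-c) = 0 ∧ s*c - t = 0) := by
    intro t s hX
    exact key2 _ _ (by linear_combination (norm := module) -hX)
  -- nonparallelism: a + b ≠ 1, c + d ≠ 1
  have hab : a + b - 1 ≠ 0 := by
    obtain ⟨X, ⟨t, ht⟩, s, hs⟩ := hmeet1
    obtain ⟨e1, -⟩ := extr1 t s (ht.symm.trans hs)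
    intro h
    apply hb0
    linear_combination e1 + s * h
  have hcd : c + d - 1 ≠ 0 := by
    obtain ⟨X, ⟨t, ht⟩, s, hs⟩ := hmeet2
    obtain ⟨e1, -⟩ := extr2 t s (ht.symm.trans hs)
    intro h
    apply hd0
    linear_combination e1 + s * h
  constructor
  · rintro ⟨X, ⟨t, ht⟩, ⟨s₁, hs₁⟩, ⟨s₂, hs₂⟩⟩
    obtain ⟨e1, e2⟩ := extr1 t s₁ (ht.symm.trans hs₁)
    obtain ⟨e3, e4⟩ := extr2 t s₂ (ht.symm.trans hs₂)
    have E1 : t * (a + b - 1) = a * b := by linear_combination -(a+b-1) * e2 - a * e1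
    have E2 : t * (c + d - 1) = c * d := by linear_combination -(c+d-1) * e4 - c * e3
    rw [div_mul_div_comm, div_mul_div_comm, div_eq_div_iff (mul_ne_zero ha1' hb1')
      (mul_ne_zero hc1' hd1')]
    linear_combination (c + d - 1) * E1 - (a + b - 1) * E2
  · intro hr
    rw [div_mul_div_comm, div_mul_div_comm, div_eq_div_iff (mul_ne_zero ha1' hb1')
      (mul_ne_zero hc1' hd1')] at hr
    have hE : a * b * (c + d - 1) = c * d * (a + b - 1) := by linear_combination -hr
    refine ⟨(1 - a*b/(a+b-1)) • fm₁ + (a*b/(a+b-1)) • f₁, ⟨a*b/(a+b-1), rfl⟩,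
      ⟨b / (a + b - 1), ?_⟩, ⟨d / (c + d - 1), ?_⟩⟩
    · match_scalars <;> field_simp [hab] <;> ring
    · match_scalars <;> field_simp [hab, hcd]
      · linear_combination -hE
      · linear_combination hE
      · ring
end

section
/- Suppose v : Z² → S² ⊂ R³ and d : Z² → R are such that for some nowhere-zero c : Z² → R the map c·(v,1) : Z² → R⁴ satisfies the discrete Moutard equation (c(v,1))₁₂ - c(v,1) = a₁₂((c(v,1))₂ - (c(v,1))₁), and suppose on each elementary quadrilateral the four planes P = {x ∈ R³ : ⟨v,x⟩ = d} meet at a common point x₀ (i.e., ⟨v,x₀⟩ = d, ⟨v₁,x₀⟩ = d₁, ⟨v₂,x₀⟩ = d₂, ⟨v₁₂,x₀⟩ = d₁₂). Then the function cd satisfies the same Moutard equation: (cd)₁₂ - cd = a₁₂((cd)₂ - (cd)₁), and hence c·(v,d,1) : Z² → R⁵ is a T-net. -/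
/-! Pairing the vector part `c • v` of the Moutard equation with the common point `x₀` of the
four planes is linear, and turns `c • v` into `c * ⟪v, x₀⟫ = c * d`; hence `c * d` satisfies the
same Moutard equation, and stacking it between `c • v` and `c` gives the T-net `c • (v, d, 1)`. -/

/-- `f₁`, `f₂`, `f₁₂` are the values at the vertices shifted in the first, second and both
lattice directions. -/
def MoutardQuad {R M : Type*} [Ring R] [AddCommGroup M] [Module R M]
    (a : R) (f f₁ f₂ f₁₂ : M) : Prop :=
  f₁₂ - f = a • (f₂ - f₁)

namespace MoutardQuad

variable {R M N : Type*} [Ring R] [AddCommGroup M] [Module R M] [AddCommGroup N] [Module R N]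
  {a : R} {f f₁ f₂ f₁₂ : M}

theorem map (h : MoutardQuad a f f₁ f₂ f₁₂) (g : M →ₗ[R] N) :
    MoutardQuad a (g f) (g f₁) (g f₂) (g f₁₂) := by
  rw [MoutardQuad, ← map_sub, h, map_smul, map_sub]

theorem prod_iff {g g₁ g₂ g₁₂ : N} :
    MoutardQuad a (f, g) (f₁, g₁) (f₂, g₂) (f₁₂, g₁₂) ↔
      MoutardQuad a f f₁ f₂ f₁₂ ∧ MoutardQuad a g g₁ g₂ g₁₂ :=
  Prod.ext_iff

end MoutardQuad

theorem MoutardQuad.mul_of_inner_eq {E : Type*} [NormedAddCommGroup E] [InnerProductSpace ℝ E]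
    {a c c₁ c₂ c₁₂ d d₁ d₂ d₁₂ : ℝ} {v v₁ v₂ v₁₂ x₀ : E}
    (h : MoutardQuad a (c • v) (c₁ • v₁) (c₂ • v₂) (c₁₂ • v₁₂))
    (hx : inner ℝ v x₀ = d) (hx₁ : inner ℝ v₁ x₀ = d₁)
    (hx₂ : inner ℝ v₂ x₀ = d₂) (hx₁₂ : inner ℝ v₁₂ x₀ = d₁₂) :
    MoutardQuad a (c * d) (c₁ * d₁) (c₂ * d₂) (c₁₂ * d₁₂) := by
  have := h.map ((innerₗ E).flip x₀)
  simpa only [LinearMap.flip_apply, innerₗ_apply_apply, real_inner_smul_left,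
    hx, hx₁, hx₂, hx₁₂] using this

theorem gauss_map_isothermic_implies_L_isothermic_general
    (v : ℤ × ℤ → EuclideanSpace ℝ (Fin 3))
    (d : ℤ × ℤ → ℝ) (c : ℤ × ℤ → ℝ)
    (a : ℤ × ℤ → ℝ)
    (hMou : ∀ u : ℤ × ℤ,
      (c (u.1 + 1, u.2 + 1) • v (u.1 + 1, u.2 + 1), c (u.1 + 1, u.2 + 1)) -
          (c u • v u, c u) =
        a u • ((c (u.1, u.2 + 1) • v (u.1, u.2 + 1), c (u.1, u.2 + 1)) -
          (c (u.1 + 1, u.2) • v (u.1 + 1, u.2), c (u.1 + 1, u.2))))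
    (hconc : ∀ u : ℤ × ℤ, ∃ x₀ : EuclideanSpace ℝ (Fin 3),
      (inner ℝ (v u) x₀ : ℝ) = d u ∧
      (inner ℝ (v (u.1 + 1, u.2)) x₀ : ℝ) = d (u.1 + 1, u.2) ∧
      (inner ℝ (v (u.1, u.2 + 1)) x₀ : ℝ) = d (u.1, u.2 + 1) ∧
      (inner ℝ (v (u.1 + 1, u.2 + 1)) x₀ : ℝ) = d (u.1 + 1, u.2 + 1)) :
    (∀ u : ℤ × ℤ,
      c (u.1 + 1, u.2 + 1) * d (u.1 + 1, u.2 + 1) - c u * d u =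
        a u * (c (u.1, u.2 + 1) * d (u.1, u.2 + 1) -
          c (u.1 + 1, u.2) * d (u.1 + 1, u.2))) ∧
    (∀ u : ℤ × ℤ,
      (c (u.1 + 1, u.2 + 1) • v (u.1 + 1, u.2 + 1),
          c (u.1 + 1, u.2 + 1) * d (u.1 + 1, u.2 + 1), c (u.1 + 1, u.2 + 1)) -
        (c u • v u, c u * d u, c u) =
      a u • ((c (u.1, u.2 + 1) • v (u.1, u.2 + 1),
          c (u.1, u.2 + 1) * d (u.1, u.2 + 1), c (u.1, u.2 + 1)) -
        (c (u.1 + 1, u.2) • v (u.1 + 1, u.2),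
          c (u.1 + 1, u.2) * d (u.1 + 1, u.2), c (u.1 + 1, u.2)))) := by
  have hLift (u : ℤ × ℤ) := MoutardQuad.prod_iff.mp (hMou u)
  have hcd (u : ℤ × ℤ) : MoutardQuad (a u) (c u * d u) (c (u.1 + 1, u.2) * d (u.1 + 1, u.2))
      (c (u.1, u.2 + 1) * d (u.1, u.2 + 1)) (c (u.1 + 1, u.2 + 1) * d (u.1 + 1, u.2 + 1)) := by
    obtain ⟨x₀, hx, hx₁, hx₂, hx₁₂⟩ := hconc u
    exact (hLift u).1.mul_of_inner_eq hx hx₁ hx₂ hx₁₂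
  exact ⟨hcd, fun u => MoutardQuad.prod_iff.mpr
    ⟨(hLift u).1, MoutardQuad.prod_iff.mpr ⟨hcd u, (hLift u).2⟩⟩⟩

/-- If the Gauss map `v` of a net of planes `P = {x : ⟨v,x⟩ = d}` admits a Moutard
lift `c·(v,1)` and on each elementary quadrilateral the four planes meet at a common
point, then `cd` satisfies the same Moutard equation, so `c·(v,d,1)` is a T-net. -/
theorem gauss_map_isothermic_implies_L_isothermic
    (v : ℤ × ℤ → EuclideanSpace ℝ (Fin 3)) (hv : ∀ u, ‖v u‖ = 1)
    (d : ℤ × ℤ → ℝ) (c : ℤ × ℤ → ℝ) (hc : ∀ u, c u ≠ 0)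
    (a : ℤ × ℤ → ℝ)
    (hMou : ∀ u : ℤ × ℤ,
      (c (u.1 + 1, u.2 + 1) • v (u.1 + 1, u.2 + 1), c (u.1 + 1, u.2 + 1)) -
          (c u • v u, c u) =
        a u • ((c (u.1, u.2 + 1) • v (u.1, u.2 + 1), c (u.1, u.2 + 1)) -
          (c (u.1 + 1, u.2) • v (u.1 + 1, u.2), c (u.1 + 1, u.2))))
    (hconc : ∀ u : ℤ × ℤ, ∃ x₀ : EuclideanSpace ℝ (Fin 3),
      (inner ℝ (v u) x₀ : ℝ) = d u ∧
      (inner ℝ (v (u.1 + 1, u.2)) x₀ : ℝ) = d (u.1 + 1, u.2) ∧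
      (inner ℝ (v (u.1, u.2 + 1)) x₀ : ℝ) = d (u.1, u.2 + 1) ∧
      (inner ℝ (v (u.1 + 1, u.2 + 1)) x₀ : ℝ) = d (u.1 + 1, u.2 + 1)) :
    (∀ u : ℤ × ℤ,
      c (u.1 + 1, u.2 + 1) * d (u.1 + 1, u.2 + 1) - c u * d u =
        a u * (c (u.1, u.2 + 1) * d (u.1, u.2 + 1) -
          c (u.1 + 1, u.2) * d (u.1 + 1, u.2))) ∧
    (∀ u : ℤ × ℤ,
      (c (u.1 + 1, u.2 + 1) • v (u.1 + 1, u.2 + 1),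
          c (u.1 + 1, u.2 + 1) * d (u.1 + 1, u.2 + 1), c (u.1 + 1, u.2 + 1)) -
        (c u • v u, c u * d u, c u) =
      a u • ((c (u.1, u.2 + 1) • v (u.1, u.2 + 1),
          c (u.1, u.2 + 1) * d (u.1, u.2 + 1), c (u.1, u.2 + 1)) -
        (c (u.1 + 1, u.2) • v (u.1 + 1, u.2),
          c (u.1 + 1, u.2) * d (u.1 + 1, u.2), c (u.1 + 1, u.2)))) :=
  gauss_map_isothermic_implies_L_isothermic_general v d c a hMou hconc
end
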